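/- Let f in F_q[x] be a monic polynomial that is not a perfect square, with q odd. Then the absolute value of the sum over square-free monic D of degree 2g+1 of the Jacobi symbol (D/f) is at most 2^{deg(f)-1} · q^{g + 1/2}. -/

import Mathlib

open Polynomial UniqueFactorizationMonoid
open scoped Classical

/-- The quadratic residue symbol `(D/P)` for an irreducible `P` in `F_q[x]`:
`0` if `P ∣ D`, `1` if `D` is a nonzero square mod `P`, `-1` otherwise. -/
noncomputable def quadSym {F : Type*} [Field F] [Fintype F] (D P : F[X]) : ℤ :=
  if P ∣ D then 0 else if ∃ x : F[X], P ∣ (x ^ 2 - D) then 1 else -1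

/-- The Jacobi symbol `(D/f)`, the product of `(D/P)` over the monic irreducible
factors of `f` counted with multiplicity. -/
noncomputable def jacSym {F : Type*} [Field F] [Fintype F] (D f : F[X]) : ℤ :=
  ((normalizedFactors f).map (quadSym D)).prod

/-!
Since `(·/f)` is completely multiplicative and the indicator of squarefree monic `D` is
`∑_{A monic, A² ∣ D} μ(A)`, the sum equals
`∑_{deg A ≤ g} μ(A) (A/f)² T(2g+1-2 deg A)` with `T(m)` the sum of `(B/f)` over monic `B` of
degree `m`. There are `q^a` monic `A` of degree `a`, and the Weil bound gives
`|T(2g+1-2a)| ≤ C(deg f - 1, 2g+1-2a) q^{g-a+1/2}`, so the sum is at most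
`q^{g+1/2} ∑_a C(deg f - 1, 2g+1-2a) ≤ 2^{deg f - 1} q^{g+1/2}`.
-/

theorem UniqueFactorizationMonoid.abs_moebius_le_one {α : Type*} [CommMonoidWithZero α]
    [UniqueFactorizationMonoid α] (a : α) : |moebius a| ≤ 1 := by
  unfold moebius
  split_ifs <;> simp

theorem Nat.sum_choose_le_two_pow (d : ℕ) (s : Finset ℕ) : ∑ j ∈ s, d.choose j ≤ 2 ^ d :=
  calc ∑ j ∈ s, d.choose j = ∑ j ∈ s ∩ Finset.range (d + 1), d.choose j :=
        (Finset.sum_subset Finset.inter_subset_left fun j hs hj =>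
          Nat.choose_eq_zero_of_lt (by simp_all)).symm
    _ ≤ ∑ j ∈ Finset.range (d + 1), d.choose j :=
        Finset.sum_le_sum_of_subset Finset.inter_subset_right
    _ = 2 ^ d := Nat.sum_range_choose d

namespace Polynomial

section Moebius

variable {K : Type*} [Field K]

noncomputable def sqPrimeDivisors (D : K[X]) : Finset K[X] :=
  {P ∈ (normalizedFactors D).toFinset | P ^ 2 ∣ D}

theorem mem_sqPrimeDivisors {D P : K[X]} (hD : D ≠ 0) :
    P ∈ sqPrimeDivisors D ↔ Irreducible P ∧ P.Monic ∧ P ^ 2 ∣ D := by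
  rw [sqPrimeDivisors, Finset.mem_filter, Multiset.mem_toFinset,
    Polynomial.mem_normalizedFactors_iff hD]
  exact ⟨fun ⟨⟨hP, hm, _⟩, h2⟩ => ⟨hP, hm, h2⟩,
    fun ⟨hP, hm, h2⟩ => ⟨⟨hP, hm, (dvd_pow_self P two_ne_zero).trans h2⟩, h2⟩⟩

theorem sqPrimeDivisors_eq_empty_iff {D : K[X]} (hD : D ≠ 0) :
    sqPrimeDivisors D = ∅ ↔ Squarefree D := by
  rw [squarefree_iff_irreducible_sq_not_dvd_of_ne_zero hD, Finset.eq_empty_iff_forall_notMem]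
  refine ⟨fun h x hx hxx => h (normalize x) ?_, fun h P hP => ?_⟩
  · rw [mem_sqPrimeDivisors hD, pow_two]
    refine ⟨(associated_normalize x).irreducible hx, monic_normalize hx.ne_zero, ?_⟩
    exact (mul_dvd_mul (normalize_dvd_iff.mpr dvd_rfl) (normalize_dvd_iff.mpr dvd_rfl)).trans hxx
  · obtain ⟨hP, -, h2⟩ := (mem_sqPrimeDivisors hD).mp hP
    exact h P hP (pow_two P ▸ h2)

theorem normalizedFactors_finset_prod {t : Finset K[X]}
    (ht : ∀ P ∈ t, Irreducible P ∧ P.Monic) : normalizedFactors (∏ P ∈ t, P) = t.val := by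
  rw [Finset.prod_eq_multiset_prod, Multiset.map_id',
    normalizedFactors_prod_eq _ fun P hP => (ht P hP).1]
  exact (Multiset.map_congr rfl fun P hP => (ht P hP).2.normalize_eq_self).trans
    (Multiset.map_id' _)

theorem prod_toFinset_normalizedFactors {A : K[X]} (hA : A.Monic) (hsq : Squarefree A) :
    ∏ P ∈ (normalizedFactors A).toFinset, P = A := by
  rw [Finset.prod_eq_multiset_prod, Multiset.map_id', Multiset.toFinset_val,
    Multiset.dedup_eq_self.mpr ((squarefree_iff_nodup_normalizedFactors hA.ne_zero).mp hsq),
    prod_normalizedFactors_eq hA.ne_zero, hA.normalize_eq_self]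

theorem moebius_finset_prod {t : Finset K[X]} (ht : ∀ P ∈ t, Irreducible P ∧ P.Monic) :
    moebius (∏ P ∈ t, P) = (-1) ^ t.card := by
  have hne : ∏ P ∈ t, P ≠ 0 := (monic_prod_of_monic _ _ fun P hP => (ht P hP).2).ne_zero
  have hnf := normalizedFactors_finset_prod ht
  have hsq : Squarefree (∏ P ∈ t, P) := by
    rw [squarefree_iff_nodup_normalizedFactors hne, hnf]
    exact t.nodup
  rw [hsq.moebius_eq, ← Multiset.card_map normalize, ← normalizedFactors, hnf, Finset.card_val]

theorem eq_of_monic_irreducible_dvd {P Q : K[X]} (hP : Irreducible P) (hQ : Irreducible Q)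
    (hPm : P.Monic) (hQm : Q.Monic) (h : P ∣ Q) : P = Q :=
  eq_of_monic_of_associated hPm hQm (hP.associated_of_dvd hQ h)

theorem sq_finset_prod_dvd {D : K[X]} (hD : D ≠ 0) {t : Finset K[X]}
    (ht : t ⊆ sqPrimeDivisors D) : (∏ P ∈ t, P) ^ 2 ∣ D := by
  have hmem := fun P (hP : P ∈ t) => (mem_sqPrimeDivisors hD).mp (ht hP)
  rw [← Finset.prod_pow]
  refine Finset.prod_dvd_of_coprime (fun P hP Q hQ hne => IsCoprime.pow ?_)
    fun P hP => (hmem P hP).2.2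
  obtain ⟨hPi, hPm, -⟩ := hmem P hP
  obtain ⟨hQi, hQm, -⟩ := hmem Q hQ
  exact hPi.coprime_iff_not_dvd.mpr fun h => hne (eq_of_monic_irreducible_dvd hPi hQi hPm hQm h)

theorem sum_moebius_of_sq_dvd {D : K[X]} (hD : D ≠ 0) {s : Finset K[X]}
    (hs : ∀ A, A ∈ s ↔ A.Monic ∧ A ^ 2 ∣ D) :
    ∑ A ∈ s, moebius A = if Squarefree D then 1 else 0 := by
  have hirr : ∀ t ⊆ sqPrimeDivisors D, ∀ P ∈ t, Irreducible P ∧ P.Monic := fun t ht P hP =>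
    ((mem_sqPrimeDivisors hD).mp (ht hP)).imp_right And.left
  rw [← if_congr (sqPrimeDivisors_eq_empty_iff hD) rfl rfl,
    ← Finset.sum_powerset_neg_one_pow_card, ← Finset.sum_filter_of_ne fun A _ hA =>
      by_contra fun hsq => hA (moebius_of_not_squarefree hsq)]
  -- The squarefree monic `A` with `A ^ 2 ∣ D` are the products of subsets of `sqPrimeDivisors D`.
  refine (Finset.sum_nbij' (fun t => ∏ P ∈ t, P) (fun A => (normalizedFactors A).toFinset)
    ?_ ?_ ?_ ?_ ?_).symm
  · intro t ht
    have ht' := Finset.mem_powerset.mp ht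
    have hnf := normalizedFactors_finset_prod (hirr t ht')
    have hm : (∏ P ∈ t, P).Monic := monic_prod_of_monic _ _ fun P hP => (hirr t ht' P hP).2
    refine Finset.mem_filter.mpr ⟨(hs _).mpr ⟨hm, sq_finset_prod_dvd hD ht'⟩, ?_⟩
    rw [squarefree_iff_nodup_normalizedFactors hm.ne_zero, hnf]
    exact t.nodup
  · intro A hA
    obtain ⟨hA, -⟩ := Finset.mem_filter.mp hA
    obtain ⟨hAm, hAD⟩ := (hs A).mp hA
    refine Finset.mem_powerset.mpr fun P hP => (mem_sqPrimeDivisors hD).mpr ?_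
    obtain ⟨hPi, hPm, hPA⟩ :=
      (Polynomial.mem_normalizedFactors_iff hAm.ne_zero).mp (Multiset.mem_toFinset.mp hP)
    exact ⟨hPi, hPm, (pow_dvd_pow_of_dvd hPA 2).trans hAD⟩
  · intro t ht
    rw [normalizedFactors_finset_prod (hirr t (Finset.mem_powerset.mp ht)), Finset.val_toFinset]
  · intro A hA
    obtain ⟨hA, hsq⟩ := Finset.mem_filter.mp hA
    exact prod_toFinset_normalizedFactors ((hs A).mp hA).1 hsq
  · intro t ht
    exact (moebius_finset_prod (hirr t (Finset.mem_powerset.mp ht))).symm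

end Moebius

section MonicsOfDegree

variable {R : Type*} [Ring R] [Nontrivial R] [Fintype R]

theorem finite_setOf_monic_natDegree_eq (n : ℕ) :
    {p : R[X] | p.Monic ∧ p.natDegree = n}.Finite :=
  Set.finite_coe_iff.mp
    (Finite.of_equiv _ ((monicEquivDegreeLT n).trans (degreeLTEquiv R n).toEquiv).symm)

variable (R) in
noncomputable def monicsOfDegree (n : ℕ) : Finset R[X] :=
  (finite_setOf_monic_natDegree_eq n).toFinset

@[simp]
theorem mem_monicsOfDegree {n : ℕ} {p : R[X]} :
    p ∈ monicsOfDegree R n ↔ p.Monic ∧ p.natDegree = n :=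
  Set.Finite.mem_toFinset _

theorem card_monicsOfDegree (n : ℕ) : (monicsOfDegree R n).card = Fintype.card R ^ n := by
  rw [monicsOfDegree, ← Nat.card_eq_card_finite_toFinset, Set.coe_ofPred,
    Nat.card_congr ((monicEquivDegreeLT n).trans (degreeLTEquiv R n).toEquiv),
    Nat.card_eq_fintype_card, Fintype.card_fun, Fintype.card_fin]

theorem finsum_mem_monic_natDegree_eq {M : Type*} [AddCommMonoid M] (φ : R[X] → M) (n : ℕ) :
    ∑ᶠ p ∈ {p : R[X] | p.Monic ∧ p.natDegree = n}, φ p = ∑ p ∈ monicsOfDegree R n, φ p := by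
  rw [monicsOfDegree, ← finsum_mem_coe_finset, Set.Finite.coe_toFinset]

theorem sum_monicsOfDegree_filter_dvd {M : Type*} [AddCommMonoid M] (φ : R[X] → M) {C : R[X]}
    (hC : C.Monic) {n : ℕ} (hn : C.natDegree ≤ n) :
    ∑ D ∈ monicsOfDegree R n with C ∣ D, φ D =
      ∑ B ∈ monicsOfDegree R (n - C.natDegree), φ (C * B) := by
  refine (Finset.sum_nbij (C * ·) (fun B hB => ?_) (fun _ _ _ _ h => hC.isRegular.left h)
    (fun D hD => ?_) fun _ _ => rfl).symm
  · obtain ⟨hBm, hBn⟩ := mem_monicsOfDegree.mp hB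
    simp only [Finset.mem_filter, mem_monicsOfDegree, hC.mul hBm, hC.natDegree_mul hBm, hBn]
    exact ⟨⟨trivial, by omega⟩, dvd_mul_right C B⟩
  · obtain ⟨hDdeg, B, rfl⟩ := Finset.mem_filter.mp (Finset.mem_coe.mp hD)
    obtain ⟨hDm, hDn⟩ := mem_monicsOfDegree.mp hDdeg
    have hBm := hC.of_mul_monic_left hDm
    rw [hC.natDegree_mul hBm] at hDn
    exact ⟨B, mem_monicsOfDegree.mpr ⟨hBm, by omega⟩, rfl⟩

end MonicsOfDegree

section Field

variable {F : Type*} [Field F] [Fintype F]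

theorem sum_squarefree_eq_sum_moebius {S : Type*} [CommRing S] (χ : F[X] → S)
    (hχ : ∀ A B, χ (A * B) = χ A * χ B) (n : ℕ) :
    ∑ D ∈ monicsOfDegree F n with Squarefree D, χ D =
      ∑ a ∈ Finset.range (n / 2 + 1), ∑ A ∈ monicsOfDegree F a,
        moebius A * χ A ^ 2 * ∑ B ∈ monicsOfDegree F (n - 2 * a), χ B := by
  set L := (Finset.range (n / 2 + 1)).biUnion (monicsOfDegree F)
  have hL : ∀ A, A ∈ L ↔ A.Monic ∧ A.natDegree ≤ n / 2 := fun A => by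
    simp only [L, Finset.mem_biUnion, Finset.mem_range, mem_monicsOfDegree]
    exact ⟨fun ⟨a, ha, hm, hd⟩ => ⟨hm, by omega⟩, fun ⟨hm, hd⟩ => ⟨_, by omega, hm, rfl⟩⟩
  calc ∑ D ∈ monicsOfDegree F n with Squarefree D, χ D
      = ∑ D ∈ monicsOfDegree F n, ∑ A ∈ L with A ^ 2 ∣ D, moebius A * χ D := by
        rw [Finset.sum_filter]
        refine Finset.sum_congr rfl fun D hD => ?_
        obtain ⟨hDm, hDn⟩ := mem_monicsOfDegree.mp hD
        have hs : ∀ A, A ∈ L.filter (· ^ 2 ∣ D) ↔ A.Monic ∧ A ^ 2 ∣ D := fun A => by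
          rw [Finset.mem_filter, hL]
          refine ⟨fun ⟨⟨hm, _⟩, h⟩ => ⟨hm, h⟩, fun ⟨hm, h⟩ => ⟨⟨hm, ?_⟩, h⟩⟩
          have := natDegree_le_of_dvd h hDm.ne_zero
          rw [hm.natDegree_pow] at this
          omega
        rw [← Finset.sum_mul, ← Int.cast_sum, sum_moebius_of_sq_dvd hDm.ne_zero hs]
        split_ifs <;> simp
    _ = ∑ A ∈ L, moebius A * ∑ D ∈ monicsOfDegree F n with A ^ 2 ∣ D, χ D := by
        simp_rw [Finset.mul_sum]
        exact Finset.sum_comm' fun D A => by simp only [Finset.mem_filter]; tauto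
    _ = ∑ A ∈ L,
          moebius A * χ A ^ 2 * ∑ B ∈ monicsOfDegree F (n - 2 * A.natDegree), χ B := by
        refine Finset.sum_congr rfl fun A hA => ?_
        obtain ⟨hAm, hAn⟩ := (hL A).mp hA
        rw [sum_monicsOfDegree_filter_dvd χ (hAm.pow 2) (by rw [hAm.natDegree_pow]; omega),
          hAm.natDegree_pow, Finset.mul_sum, Finset.mul_sum]
        simp_rw [pow_two, hχ, mul_assoc]
    _ = _ := by
        refine Finset.sum_biUnion (fun a _ b _ hab => Finset.disjoint_left.mpr fun A ha hb => ?_)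
          |>.trans (Finset.sum_congr rfl fun a _ => Finset.sum_congr rfl fun A hA => ?_)
        · exact hab ((mem_monicsOfDegree.mp ha).2.symm.trans (mem_monicsOfDegree.mp hb).2)
        · rw [(mem_monicsOfDegree.mp hA).2]

theorem abs_sum_squarefree_le (χ : F[X] → ℝ) (hχ : ∀ A B, χ (A * B) = χ A * χ B)
    (hχ_le : ∀ A, |χ A| ≤ 1) (d : ℕ)
    (hT : ∀ m, |∑ B ∈ monicsOfDegree F m, χ B| ≤ d.choose m * √(Fintype.card F) ^ m) (n : ℕ) :
    |∑ D ∈ monicsOfDegree F n with Squarefree D, χ D| ≤ 2 ^ d * √(Fintype.card F) ^ n := by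
  set r := √(Fintype.card F)
  have hterm : ∀ A, |(moebius A : ℝ) * χ A ^ 2| ≤ 1 := fun A => by
    rw [abs_mul, abs_pow, ← Int.cast_abs]
    exact mul_le_one₀ (mod_cast abs_moebius_le_one A) (by positivity)
      (pow_le_one₀ (abs_nonneg _) (hχ_le A))
  have hchoose : ∑ a ∈ Finset.range (n / 2 + 1), (d.choose (n - 2 * a) : ℝ) ≤ 2 ^ d := by
    rw [← Finset.sum_image (g := (n - 2 * ·)) (f := fun j => (d.choose j : ℝ))
      fun a ha b hb h => by simp only [Finset.coe_range, Set.mem_Iio] at ha hb h; omega]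
    exact_mod_cast Nat.sum_choose_le_two_pow d _
  rw [sum_squarefree_eq_sum_moebius χ hχ n]
  calc _ ≤ ∑ a ∈ Finset.range (n / 2 + 1), ∑ A ∈ monicsOfDegree F a,
        |∑ B ∈ monicsOfDegree F (n - 2 * a), χ B| := by
        refine (Finset.abs_sum_le_sum_abs _ _).trans (Finset.sum_le_sum fun a _ => ?_)
        refine (Finset.abs_sum_le_sum_abs _ _).trans (Finset.sum_le_sum fun A _ => ?_)
        rw [abs_mul]
        exact mul_le_of_le_one_left (abs_nonneg _) (hterm A)
    _ ≤ ∑ a ∈ Finset.range (n / 2 + 1),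
          r ^ (2 * a) * (d.choose (n - 2 * a) * r ^ (n - 2 * a)) := by
        refine Finset.sum_le_sum fun a _ => ?_
        rw [Finset.sum_const, card_monicsOfDegree, nsmul_eq_mul, pow_mul,
          Real.sq_sqrt (Nat.cast_nonneg _), Nat.cast_pow]
        exact mul_le_mul_of_nonneg_left (hT _) (by positivity)
    _ = (∑ a ∈ Finset.range (n / 2 + 1), (d.choose (n - 2 * a) : ℝ)) * r ^ n := by
        rw [Finset.sum_mul]
        refine Finset.sum_congr rfl fun a ha => ?_
        rw [mul_left_comm, ← pow_add, Nat.add_sub_cancel' (by simp at ha; omega)]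
    _ ≤ 2 ^ d * r ^ n := mul_le_mul_of_nonneg_right hchoose (by positivity)

end Field

end Polynomial

section JacobiSymbol

variable {F : Type*} [Field F] [Fintype F]

theorem quadSym_eq_quadraticCharFun (D P : F[X]) :
    quadSym D P = quadraticCharFun (AdjoinRoot P) (AdjoinRoot.mk P D) := by
  have hsq : (∃ x : F[X], P ∣ x ^ 2 - D) ↔ IsSquare (AdjoinRoot.mk P D) := by
    refine ⟨fun ⟨x, hx⟩ => ⟨AdjoinRoot.mk P x, ?_⟩, fun ⟨r, hr⟩ => ?_⟩
    · rw [← map_mul, ← pow_two]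
      exact (AdjoinRoot.mk_eq_mk.mpr hx).symm
    · obtain ⟨x, rfl⟩ := AdjoinRoot.mk_surjective r
      exact ⟨x, AdjoinRoot.mk_eq_mk.mp (by rw [pow_two, map_mul, hr])⟩
  simp only [quadSym, quadraticCharFun, AdjoinRoot.mk_eq_zero, hsq]

theorem quadSym_mul {P : F[X]} (hP : Irreducible P) (A B : F[X]) :
    quadSym (A * B) P = quadSym A P * quadSym B P := by
  have : Fact (Irreducible P) := ⟨hP⟩
  have := (AdjoinRoot.powerBasis hP.ne_zero).finite
  have : Finite (AdjoinRoot P) := Module.finite_of_finite F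
  let := Fintype.ofFinite (AdjoinRoot P)
  simp only [quadSym_eq_quadraticCharFun, map_mul]
  -- `convert` reconciles the classical and the `Fintype` decidability of `IsSquare`.
  convert quadraticCharFun_mul (AdjoinRoot.mk P A) (AdjoinRoot.mk P B)

theorem jacSym_mul (A B f : F[X]) : jacSym (A * B) f = jacSym A f * jacSym B f := by
  rw [jacSym, jacSym, jacSym, ← Multiset.prod_map_mul]
  exact congrArg _ (Multiset.map_congr rfl fun P hP =>
    quadSym_mul (irreducible_of_normalized_factor P hP) A B)

theorem abs_quadSym_le_one (D P : F[X]) : |quadSym D P| ≤ 1 := by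
  unfold quadSym
  split_ifs <;> simp

theorem abs_jacSym_le_one (D f : F[X]) : |jacSym D f| ≤ 1 := by
  rw [jacSym]
  induction normalizedFactors f using Multiset.induction with
  | empty => simp
  | cons P m ih =>
    rw [Multiset.map_cons, Multiset.prod_cons, abs_mul]
    exact mul_le_one₀ (abs_quadSym_le_one D P) (abs_nonneg _) ih

end JacobiSymbol

theorem jacobi_sum_bound_general {F : Type*} [Field F] [Fintype F] (q : ℕ)
    (hq : Fintype.card F = q)
    (f : F[X]) (g : ℕ)
    (hWeil : ∀ n < f.natDegree,
      |∑ᶠ B ∈ {B : F[X] | B.Monic ∧ B.natDegree = n}, (jacSym B f : ℝ)| ≤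
        (Nat.choose (f.natDegree - 1) n : ℝ) * Real.sqrt q ^ n)
    (hvanish : ∀ n, f.natDegree ≤ n →
      ∑ᶠ B ∈ {B : F[X] | B.Monic ∧ B.natDegree = n}, (jacSym B f : ℝ) = 0) :
    |∑ᶠ D ∈ {D : F[X] | D.Monic ∧ D.natDegree = 2 * g + 1 ∧ Squarefree D},
        (jacSym D f : ℝ)| ≤
      2 ^ (f.natDegree - 1) * ((q : ℝ) ^ g * Real.sqrt q) := by
  subst hq
  have hT : ∀ m, |∑ B ∈ monicsOfDegree F m, (jacSym B f : ℝ)| ≤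
      (f.natDegree - 1).choose m * √(Fintype.card F) ^ m := fun m => by
    rw [← finsum_mem_monic_natDegree_eq]
    rcases lt_or_ge m f.natDegree with hm | hm
    · exact hWeil m hm
    · rw [hvanish m hm, abs_zero]
      positivity
  have hset : {D : F[X] | D.Monic ∧ D.natDegree = 2 * g + 1 ∧ Squarefree D} =
      ↑(monicsOfDegree F (2 * g + 1) |>.filter Squarefree) := by
    ext D
    simp [and_assoc]
  have hpow :
      (Fintype.card F : ℝ) ^ g * √(Fintype.card F) = √(Fintype.card F) ^ (2 * g + 1) := by
    rw [pow_succ, pow_mul, Real.sq_sqrt (Nat.cast_nonneg _)]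
  rw [hset, finsum_mem_coe_finset, hpow]
  exact abs_sum_squarefree_le _ (fun A B => by rw [jacSym_mul, Int.cast_mul])
    (fun A => mod_cast abs_jacSym_le_one A f) _ hT _

/-- Let `q` be odd and `f` monic, not a perfect square. Assuming the Weil bound for
the nontrivial character `(·/f)` (character sums over monic `B` of degree `n` are
bounded by `C(deg f - 1, n) q^{n/2}` for `n < deg f` and vanish for `n ≥ deg f`),
the sum of `(D/f)` over square-free monic `D` of degree `2g+1` is at most
`2^{deg f - 1} q^{g + 1/2}` in absolute value. -/
theorem jacobi_sum_bound {F : Type*} [Field F] [Fintype F] (q : ℕ)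
    (hq : Fintype.card F = q) (hodd : Odd q)
    (f : F[X]) (hf : f.Monic) (hns : ¬IsSquare f) (g : ℕ)
    (hWeil : ∀ n < f.natDegree,
      |∑ᶠ B ∈ {B : F[X] | B.Monic ∧ B.natDegree = n}, (jacSym B f : ℝ)| ≤
        (Nat.choose (f.natDegree - 1) n : ℝ) * Real.sqrt q ^ n)
    (hvanish : ∀ n, f.natDegree ≤ n →
      ∑ᶠ B ∈ {B : F[X] | B.Monic ∧ B.natDegree = n}, (jacSym B f : ℝ) = 0) :
    |∑ᶠ D ∈ {D : F[X] | D.Monic ∧ D.natDegree = 2 * g + 1 ∧ Squarefree D},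
        (jacSym D f : ℝ)| ≤
      2 ^ (f.natDegree - 1) * ((q : ℝ) ^ g * Real.sqrt q) :=
  jacobi_sum_bound_general q hq f g hWeil hvanish
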